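/- arXiv:2106.06634 — 3 statements merged into one kernel-verified Lean document; each statement's English description precedes it below -/
import Mathlib

section
/- Let N ≥ 2 and M ≥ 2 be integers, let c : Fin N → ((Fin N → ℕ) → ℝ) be a family of real coefficients, let z₀ : Fin N → ℝ be initial data, and let K be a real number such that for every n, K·z₀(n) = (1 − M)·∑_{m : Fin N → ℕ, ∑_k m(k) = M} c(n)(m)·∏_{k} z₀(k)^{m(k)}. Define z(n)(t) := z₀(n)·(1 + K·t)^{1/(1 − M)} (real power of the positive base 1 + K·t). Then for every real t with 1 + K·t > 0 and every n, the function z(n) is differentiable at t with derivative equal to ∑_{m : Fin N → ℕ, ∑_k m(k) = M} c(n)(m)·∏_{k} z(k)(t)^{m(k)}; i.e., z solves the homogeneous polynomial system ż_n = ∑_m c_{n,m} ∏_k z_k^{m_k}. -/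
/-! The ansatz `z = z₀ · u` with a scalar `u` turns the system into `z₀ n · u' = u^M · S_n`
by homogeneity of the right-hand side, and the constraint on `K` says `S_n = K z₀ n / (1 - M)`.
So it suffices that `u = (1 + K t)^{1/(1-M)}` solves the scalar equation `u' = K/(1-M) · u^M`. -/

open Finset

/-- The finite set of multi-indices `m : Fin N → ℕ` with `∑ k, m k = M`. -/
def multiIdx (N M : ℕ) : Finset (Fin N → ℕ) :=
  (Fintype.piFinset fun _ : Fin N => Finset.range (M + 1)).filter fun m => ∑ k, m k = M

theorem sum_multiIdx_mul_prod_mul_pow {R : Type*} [CommSemiring R] {N M : ℕ}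
    (c : (Fin N → ℕ) → R) (x : Fin N → R) (a : R) :
    ∑ m ∈ multiIdx N M, c m * ∏ k, (x k * a) ^ m k
      = (∑ m ∈ multiIdx N M, c m * ∏ k, x k ^ m k) * a ^ M := by
  rw [Finset.sum_mul]
  refine Finset.sum_congr rfl fun m hm => ?_
  have hdeg : ∑ k, m k = M := (Finset.mem_filter.mp hm).2
  simp only [mul_pow, Finset.prod_mul_distrib, Finset.prod_pow_eq_pow_sum, hdeg, mul_assoc]

theorem hasDerivAt_one_add_mul_rpow_one_div_one_sub {K p t : ℝ} (hp : p ≠ 1)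
    (ht : 0 < 1 + K * t) :
    HasDerivAt (fun s => (1 + K * s) ^ (1 / (1 - p)))
      (K / (1 - p) * ((1 + K * t) ^ (1 / (1 - p))) ^ p) t := by
  have hp' : 1 - p ≠ 0 := sub_ne_zero.mpr hp.symm
  have hexp : 1 / (1 - p) - 1 = 1 / (1 - p) * p := by field_simp; ring
  have hlin : HasDerivAt (fun s : ℝ => 1 + K * s) K t := by
    simpa using ((hasDerivAt_id t).const_mul K).const_add 1
  convert hlin.rpow_const (p := 1 / (1 - p)) (Or.inl ht.ne') using 1
  rw [← Real.rpow_mul ht.le, ← hexp]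
  ring

theorem statement0_general (N M : ℕ) (hM : 2 ≤ M)
    (c : Fin N → (Fin N → ℕ) → ℝ) (z₀ : Fin N → ℝ) (K : ℝ)
    (hK : ∀ n : Fin N,
      K * z₀ n = (1 - (M : ℝ)) * ∑ m ∈ multiIdx N M, c n m * ∏ k, z₀ k ^ m k)
    (z : Fin N → ℝ → ℝ)
    (hz : ∀ (n : Fin N) (t : ℝ),
      z n t = z₀ n * (1 + K * t) ^ ((1 : ℝ) / (1 - (M : ℝ))))
    (t : ℝ) (ht : 0 < 1 + K * t) (n : Fin N) :
    HasDerivAt (z n) (∑ m ∈ multiIdx N M, c n m * ∏ k, z k t ^ m k) t := by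
  have hM1 : (M : ℝ) ≠ 1 := by
    have : (2 : ℝ) ≤ M := by exact_mod_cast hM
    linarith
  have hzn : z n = fun s => z₀ n * (1 + K * s) ^ ((1 : ℝ) / (1 - (M : ℝ))) := funext (hz n)
  simp only [hz, sum_multiIdx_mul_prod_mul_pow, hzn]
  refine ((hasDerivAt_one_add_mul_rpow_one_div_one_sub hM1 ht).const_mul (z₀ n)).congr_deriv ?_
  rw [Real.rpow_natCast]
  field_simp [sub_ne_zero.mpr hM1.symm]
  rw [mul_comm]
  exact hK n

/-- The special solution `z_n(t) = z_n(0) (1 + K t)^{1/(1-M)}` solves the homogeneous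
polynomial system `ż_n = ∑_m c_{n,m} ∏_k z_k^{m_k}`, provided the algebraic constraints
`K z_n(0) = (1-M) ∑_m c_{n,m} ∏_k z_k(0)^{m_k}` hold. -/
theorem statement0 (N M : ℕ) (hN : 2 ≤ N) (hM : 2 ≤ M)
    (c : Fin N → (Fin N → ℕ) → ℝ) (z₀ : Fin N → ℝ) (K : ℝ)
    (hK : ∀ n : Fin N,
      K * z₀ n = (1 - (M : ℝ)) * ∑ m ∈ multiIdx N M, c n m * ∏ k, z₀ k ^ m k)
    (z : Fin N → ℝ → ℝ)
    (hz : ∀ (n : Fin N) (t : ℝ),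
      z n t = z₀ n * (1 + K * t) ^ ((1 : ℝ) / (1 - (M : ℝ))))
    (t : ℝ) (ht : 0 < 1 + K * t) (n : Fin N) :
    HasDerivAt (z n) (∑ m ∈ multiIdx N M, c n m * ∏ k, z k t ^ m k) t :=
  statement0_general N M hM c z₀ K hK z hz t ht n
end

section
/- Let N ≥ 2 and M ≥ 2 be integers, ω a nonzero real number, and c : Fin N → ((Fin N → ℕ) → ℂ) complex coefficients, and set τ(t) := (exp(iωt) − 1)/(iω) for t ∈ ℝ. Suppose z : ℂ → Fin N → ℂ is such that for every real t and every n, the function ζ ↦ z(ζ)(n) has complex derivative at τ(t) equal to ∑_{m : Fin N → ℕ, ∑_k m(k) = M} c(n)(m)·∏_{k} z(τ(t))(k)^{m(k)}. Define w(n)(t) := exp(iωt/(M − 1))·z(τ(t))(n). Then for every real t and every n, w(n) has derivative at t equal to (iω/(M − 1))·w(n)(t) + ∑_{m : Fin N → ℕ, ∑_k m(k) = M} c(n)(m)·∏_{k} w(k)(t)^{m(k)}; i.e., the change of variables transforms any solution of the homogeneous system into a solution of the autonomous modified system ẇ_n = (iω/(M−1))·w_n + ∑_m c_{n,m} ∏_k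 w_k^{m_k}. -/
/-!
By the chain rule, `d/dt z(τ(t)) = τ̇(t) · f(z(τ(t)))` with `τ̇(t) = exp(iωt)`, and the prefactor
`λ = exp(iωt/(M-1))` satisfies `λ · exp(iωt) = λ ^ M`. Since `f` is homogeneous of degree `M`,
`λ ^ M f(z) = f(λ z) = f(w)`; the product rule contributes the remaining linear term
`(iω/(M-1)) w`.
-/

open Finset Complex

theorem hasDerivAt_cexp_mul_ofReal (a : ℂ) (t : ℝ) :
    HasDerivAt (fun s : ℝ => exp (a * s)) (a * exp (a * t)) t := by
  simpa [mul_comm] using ((hasDerivAt_id (t : ℂ)).const_mul a).cexp.comp_ofReal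

theorem hasDerivAt_cexp_mul_ofReal_sub_one_div {a : ℂ} (ha : a ≠ 0) (t : ℝ) :
    HasDerivAt (fun s : ℝ => (exp (a * s) - 1) / a) (exp (a * t)) t := by
  simpa [ha] using ((hasDerivAt_cexp_mul_ofReal a t).sub_const 1).div_const a

theorem cexp_div_mul_cexp_eq_pow (a : ℂ) {M : ℕ} (hM : (M : ℂ) - 1 ≠ 0) :
    exp (a / (M - 1)) * exp a = exp (a / (M - 1)) ^ M := by
  rw [← exp_nat_mul, ← exp_add]
  congr 1
  field_simp
  ring

theorem prod_const_mul_pow_of_sum_eq {ι R : Type*} [Fintype ι] [CommMonoid R]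
    {M : ℕ} {m : ι → ℕ} (hm : ∑ k, m k = M) (c : R) (x : ι → R) :
    ∏ k, (c * x k) ^ m k = c ^ M * ∏ k, x k ^ m k := by
  simp only [mul_pow, prod_mul_distrib, prod_pow_eq_pow_sum, hm]

theorem sum_multiIdx_const_mul_pow {N M : ℕ} (a : (Fin N → ℕ) → ℂ) (c : ℂ) (x : Fin N → ℂ) :
    ∑ m ∈ multiIdx N M, a m * ∏ k, (c * x k) ^ m k =
      c ^ M * ∑ m ∈ multiIdx N M, a m * ∏ k, x k ^ m k := by
  rw [mul_sum]
  refine sum_congr rfl fun m hm => ?_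
  rw [prod_const_mul_pow_of_sum_eq (mem_filter.mp hm).2]
  ring

theorem statement3_general (N M : ℕ) (hM : 2 ≤ M)
    (ω : ℝ) (hω : ω ≠ 0)
    (c : Fin N → (Fin N → ℕ) → ℂ)
    (τ : ℝ → ℂ)
    (hτ : ∀ t : ℝ, τ t = (Complex.exp (Complex.I * ω * t) - 1) / (Complex.I * ω))
    (z : ℂ → Fin N → ℂ)
    (hz : ∀ (t : ℝ) (n : Fin N),
      HasDerivAt (fun ζ : ℂ => z ζ n)
        (∑ m ∈ multiIdx N M, c n m * ∏ k, z (τ t) k ^ m k) (τ t))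
    (w : Fin N → ℝ → ℂ)
    (hw : ∀ (n : Fin N) (t : ℝ),
      w n t = Complex.exp (Complex.I * ω * t / ((M : ℂ) - 1)) * z (τ t) n)
    (t : ℝ) (n : Fin N) :
    HasDerivAt (w n)
      (Complex.I * ω / ((M : ℂ) - 1) * w n t +
        ∑ m ∈ multiIdx N M, c n m * ∏ k, w k t ^ m k) t := by
  have hM1 : (M : ℂ) - 1 ≠ 0 := sub_ne_zero.mpr (by exact_mod_cast (by omega : M ≠ 1))
  have hIω : I * ω ≠ 0 := mul_ne_zero I_ne_zero (ofReal_ne_zero.mpr hω)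
  set E : ℝ → ℂ := fun s => exp (I * ω * s / ((M : ℂ) - 1))
  have hE : HasDerivAt E (I * ω / ((M : ℂ) - 1) * E t) t := by
    simpa only [E, mul_div_right_comm] using
      hasDerivAt_cexp_mul_ofReal (I * ω / ((M : ℂ) - 1)) t
  have hτ' : HasDerivAt τ (exp (I * ω * t)) t := by
    rw [funext hτ]
    exact hasDerivAt_cexp_mul_ofReal_sub_one_div hIω t
  have hzτ := (hz t n).comp t hτ'
  rw [funext (hw n)]
  refine (hE.mul hzτ).congr_deriv ?_
  simp only [hw, sum_multiIdx_const_mul_pow, ← cexp_div_mul_cexp_eq_pow _ hM1]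
  simp only [E, Function.comp_apply]
  ring

/-- The change of variables `w_n(t) = exp(iωt/(M-1)) z_n(τ(t))`,
`τ(t) = (exp(iωt) - 1)/(iω)`, transforms any solution of the homogeneous system
`ż_n = ∑_m c_{n,m} ∏_k z_k^{m_k}` into a solution of the modified autonomous system
`ẇ_n = (iω/(M-1)) w_n + ∑_m c_{n,m} ∏_k w_k^{m_k}`. -/
theorem statement3 (N M : ℕ) (hN : 2 ≤ N) (hM : 2 ≤ M)
    (ω : ℝ) (hω : ω ≠ 0)
    (c : Fin N → (Fin N → ℕ) → ℂ)
    (τ : ℝ → ℂ)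
    (hτ : ∀ t : ℝ, τ t = (Complex.exp (Complex.I * ω * t) - 1) / (Complex.I * ω))
    (z : ℂ → Fin N → ℂ)
    (hz : ∀ (t : ℝ) (n : Fin N),
      HasDerivAt (fun ζ : ℂ => z ζ n)
        (∑ m ∈ multiIdx N M, c n m * ∏ k, z (τ t) k ^ m k) (τ t))
    (w : Fin N → ℝ → ℂ)
    (hw : ∀ (n : Fin N) (t : ℝ),
      w n t = Complex.exp (Complex.I * ω * t / ((M : ℂ) - 1)) * z (τ t) n)
    (t : ℝ) (n : Fin N) :
    HasDerivAt (w n)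
      (Complex.I * ω / ((M : ℂ) - 1) * w n t +
        ∑ m ∈ multiIdx N M, c n m * ∏ k, w k t ^ m k) t :=
  statement3_general N M hM ω hω c τ hτ z hz w hw t n
end

section
/- (Example 2, N = 2, M = 4, complex form.) Let ω be a nonzero real number, let c : Fin 2 → Fin 5 → ℂ be ten complex coefficients (c(n)(m) = a_{nm} + i·b_{nm}), let z₀ : Fin 2 → ℂ and K ∈ ℂ satisfy, for n = 1, 2, the constraint K·z₀(n) = −3·∑_{m=0}^{4} c(n)(m)·z₀(1)^{4−m}·z₀(2)^{m}. Define ζ(n)(t) := z₀(n)·exp(iωt/3)·(1 + K·(exp(iωt) − 1)/(iω))^{−1/3}, using the principal complex power. Then for every real t such that 1 + K·(exp(iωt) − 1)/(iω) lies in the slit plane ℂ ∖ (−∞, 0], and for n = 1, 2, ζ(n) has derivative at t equal to (iω/3)·ζ(n)(t) + ∑_{m=0}^{4} c(n)(m)·ζ(1)(t)^{4−m}·ζ(2)(t)^{m}. -/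
/-!
Every component is `z₀ n` times the same scalar function
`g(t) = exp(iωt/3) · (1 + K (exp(iωt) - 1)/(iω))^(-1/3)`, which solves the Bernoulli equation
`g' = (iω/3) g - (K/3) g⁴`. Since the nonlinearity is homogeneous of degree 4, it sends
`g · z₀` to `g⁴` times its value at `z₀`, and the constraint on `K` turns that value into
`-(K/3) z₀ n`, which is exactly the Bernoulli term.
-/

open Finset Complex

theorem sum_mul_pow_mul_pow_mul_left {R : Type*} [CommSemiring R] {M : ℕ}
    (c : Fin (M + 1) → R) (g x y : R) :
    ∑ m : Fin (M + 1), c m * (g * x) ^ (M - (m : ℕ)) * (g * y) ^ (m : ℕ) =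
      g ^ M * ∑ m : Fin (M + 1), c m * x ^ (M - (m : ℕ)) * y ^ (m : ℕ) := by
  rw [Finset.mul_sum]
  refine Finset.sum_congr rfl fun m _ => ?_
  have hm : M - (m : ℕ) + m = M := Nat.sub_add_cancel (Nat.lt_succ_iff.mp m.isLt)
  calc c m * (g * x) ^ (M - (m : ℕ)) * (g * y) ^ (m : ℕ)
      = g ^ (M - (m : ℕ) + m) * (c m * x ^ (M - (m : ℕ)) * y ^ (m : ℕ)) := by ring
    _ = _ := by rw [hm]

theorem hasDerivAt_one_add_mul_exp_sub_one_div {ω : ℝ} (hω : ω ≠ 0) (K : ℂ) (t : ℝ) :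
    HasDerivAt (fun s : ℝ => 1 + K * (exp (I * ω * s) - 1) / (I * ω))
      (K * exp (I * ω * t)) t := by
  have hIω : I * (ω : ℂ) ≠ 0 := mul_ne_zero I_ne_zero (ofReal_ne_zero.mpr hω)
  have hexp : HasDerivAt (fun z : ℂ => 1 + K * (exp (I * ω * z) - 1) / (I * ω))
      (K * (exp (I * ω * t) * (I * ω)) / (I * ω)) t :=
    ((((hasDerivAt_id (t : ℂ)).const_mul (I * ω)).cexp.sub_const 1).const_mul K
      |>.div_const (I * ω) |>.const_add 1).congr_deriv (by simp)
  simpa [mul_div_assoc, mul_div_cancel_right₀ _ hIω] using hexp.comp_ofReal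

noncomputable def bernoulliSol (ω : ℝ) (K : ℂ) (d : ℕ) (s : ℝ) : ℂ :=
  exp (I * ω * s / d) * (1 + K * (exp (I * ω * s) - 1) / (I * ω)) ^ (-1 / (d : ℂ))

theorem hasDerivAt_bernoulliSol {ω : ℝ} (hω : ω ≠ 0) (K : ℂ) {d : ℕ} (hd : d ≠ 0) {t : ℝ}
    (ht : 1 + K * (exp (I * ω * t) - 1) / (I * ω) ∈ slitPlane) :
    HasDerivAt (bernoulliSol ω K d)
      (I * ω / d * bernoulliSol ω K d t - K / d * bernoulliSol ω K d t ^ (d + 1)) t := by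
  set u := 1 + K * (exp (I * ω * t) - 1) / (I * ω)
  have hexp : HasDerivAt (fun s : ℝ => exp (I * ω * s / d))
      (exp (I * ω * t / d) * (I * ω / d)) t := by
    have := (((hasDerivAt_id (t : ℂ)).const_mul (I * ω)).div_const (d : ℂ)).cexp.comp_ofReal
    simpa using this
  have hpow := ((hasStrictDerivAt_cpow_const (c := -1 / (d : ℂ)) ht).hasDerivAt).comp t
    (hasDerivAt_one_add_mul_exp_sub_one_div hω K t)
  refine (hexp.mul hpow).congr_deriv ?_
  have hd' : (d : ℂ) ≠ 0 := Nat.cast_ne_zero.mpr hd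
  have hexp_pow : exp (I * ω * t / d) ^ (d + 1) = exp (I * ω * t) * exp (I * ω * t / d) := by
    rw [← exp_nat_mul, ← exp_add]
    congr 1
    field_simp
    push_cast
    ring
  have hcpow_pow : (u ^ (-1 / (d : ℂ))) ^ (d + 1) = u ^ (-1 / (d : ℂ) - 1) := by
    rw [← cpow_nat_mul]
    congr 1
    field_simp
    push_cast
    ring
  have hsol : bernoulliSol ω K d t = exp (I * ω * t / d) * u ^ (-1 / (d : ℂ)) := rfl
  rw [hsol, mul_pow, hexp_pow, hcpow_pow, Function.comp_apply]
  ring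

/-- Example 2 (`N = 2`, `M = 4`, complex form): the explicit functions
`ζ_n(t) = z_n(0) exp(iωt/3) (1 + K (exp(iωt) - 1)/(iω))^{-1/3}`
(principal complex power) solve the modified autonomous system
`ζ̇_n = (iω/3) ζ_n + ∑_{m=0}^{4} c_{n,m} ζ_1^{4-m} ζ_2^{m}`, `n = 1, 2`,
at every real time `t` for which the base of the power lies in the slit plane,
provided the constraints `K z_n(0) = -3 ∑_{m=0}^{4} c_{n,m} z_1(0)^{4-m} z_2(0)^{m}`
hold. -/
theorem statement6 (ω : ℝ) (hω : ω ≠ 0)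
    (c : Fin 2 → Fin 5 → ℂ) (z₀ : Fin 2 → ℂ) (K : ℂ)
    (hK : ∀ n : Fin 2,
      K * z₀ n = -3 * ∑ m : Fin 5, c n m * z₀ 0 ^ (4 - (m : ℕ)) * z₀ 1 ^ (m : ℕ))
    (ζ : Fin 2 → ℝ → ℂ)
    (hζ : ∀ (n : Fin 2) (t : ℝ),
      ζ n t = z₀ n * Complex.exp (Complex.I * ω * t / 3) *
        (1 + K * (Complex.exp (Complex.I * ω * t) - 1) / (Complex.I * ω)) ^
          (-(1 : ℂ) / 3))
    (t : ℝ)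
    (ht : 1 + K * (Complex.exp (Complex.I * ω * t) - 1) / (Complex.I * ω) ∈
      Complex.slitPlane)
    (n : Fin 2) :
    HasDerivAt (ζ n)
      (Complex.I * ω / 3 * ζ n t +
        ∑ m : Fin 5, c n m * ζ 0 t ^ (4 - (m : ℕ)) * ζ 1 t ^ (m : ℕ)) t := by
  have hsol : ∀ k, ζ k = fun s => bernoulliSol ω K 3 s * z₀ k := by
    intro k
    funext s
    rw [hζ, bernoulliSol, Nat.cast_ofNat]
    ring
  have hsum : ∑ m : Fin 5, c n m * ζ 0 t ^ (4 - (m : ℕ)) * ζ 1 t ^ (m : ℕ) =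
      -(K / 3) * bernoulliSol ω K 3 t ^ 4 * z₀ n := by
    rw [hsol 0, hsol 1, sum_mul_pow_mul_pow_mul_left]
    linear_combination (bernoulliSol ω K 3 t ^ 4 / 3) * hK n
  rw [hsum, hsol n]
  refine ((hasDerivAt_bernoulliSol hω K three_ne_zero ht).mul_const (z₀ n)).congr_deriv ?_
  push_cast
  ring
end
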